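/- arXiv:1505.06595 — 3 statements merged into one kernel-verified Lean document; each statement's English description precedes it below -/
import Mathlib

section
/- Let (G, +) be an abelian group and φ an automorphism of G. The subgroup of the permutation group of G generated by the left translations L_a : x ↦ a − φ(a) + φ(x) of the affine quandle Aff(G, φ) acts transitively on G if and only if the map x ↦ x − φ(x) is surjective. (An affine quandle is connected if and only if x ↦ x − φ(x) is onto.) -/
/-!
Every translation moves a point `x` by `(a - φ a) - (x - φ x)`, an element of the image `H` of
`x ↦ x - φ x`. Moving every point within its coset of `H` is preserved under composition and
inversion, so the whole translation group does it, and transitivity forces `H = G`.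
Conversely, if `H = G` then a single translation `L_a` with `a - φ a = c - φ b` sends `b` to `c`.
-/

/-- The left translation `x ↦ a - φ a + φ x` of the affine quandle `Aff(G, φ)`,
as a permutation of `G`. -/
def affTrans {G : Type*} [AddCommGroup G] (φ : G ≃+ G) (a : G) : Equiv.Perm G :=
  φ.toEquiv.trans (Equiv.addLeft (a - φ a))

def AddSubgroup.cosetPreservingPerm {G : Type*} [AddGroup G] (H : AddSubgroup G) :
    Subgroup (Equiv.Perm G) where
  carrier := {g | ∀ x, g x - x ∈ H}
  one_mem' x := by simp
  mul_mem' {g h} hg hh x := by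
    simpa only [Equiv.Perm.mul_apply, sub_add_sub_cancel] using H.add_mem (hg (h x)) (hh x)
  inv_mem' {g} hg x := by
    simpa only [Equiv.Perm.coe_inv, Equiv.apply_symm_apply, neg_sub] using H.neg_mem (hg (g⁻¹ x))

theorem AddSubgroup.mem_cosetPreservingPerm {G : Type*} [AddGroup G] {H : AddSubgroup G}
    {g : Equiv.Perm G} : g ∈ H.cosetPreservingPerm ↔ ∀ x, g x - x ∈ H :=
  Iff.rfl

section Affine

variable {G : Type*} [AddCommGroup G] (φ : G ≃+ G)

def affDiff : G →+ G :=
  AddMonoidHom.id G - φ.toAddMonoidHom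

@[simp]
theorem affDiff_apply (x : G) : affDiff φ x = x - φ x :=
  rfl

@[simp]
theorem affTrans_apply (a x : G) : affTrans φ a x = a - φ a + φ x :=
  rfl

theorem affTrans_sub_self (a x : G) : affTrans φ a x - x = affDiff φ a - affDiff φ x := by
  simp only [affTrans_apply, affDiff_apply]
  abel

theorem affTrans_mem_cosetPreservingPerm (a : G) :
    affTrans φ a ∈ (affDiff φ).range.cosetPreservingPerm := fun x => by
  rw [affTrans_sub_self]
  exact sub_mem ⟨a, rfl⟩ ⟨x, rfl⟩

theorem closure_range_affTrans_le :
    Subgroup.closure (Set.range (affTrans φ)) ≤ (affDiff φ).range.cosetPreservingPerm :=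
  (Subgroup.closure_le _).2 <| Set.range_subset_iff.2 (affTrans_mem_cosetPreservingPerm φ)

theorem affTrans_apply_eq_of_sub_eq {a b c : G} (h : a - φ a = c - φ b) :
    affTrans φ a b = c := by
  rw [affTrans_apply, h, sub_add_cancel]

end Affine

/-- the subgroup of the permutation group of `G` generated by the
left translations of the affine quandle `Aff(G, φ)` acts transitively on `G`
if and only if the map `x ↦ x - φ x` is surjective. -/
theorem affine_connected_iff {G : Type*} [AddCommGroup G] (φ : G ≃+ G) :
    (∀ b c : G, ∃ g ∈ Subgroup.closure (Set.range (affTrans φ)), g b = c) ↔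
      Function.Surjective fun x : G => x - φ x := by
  constructor
  · intro htrans y
    obtain ⟨g, hg, rfl⟩ := htrans 0 y
    obtain ⟨x, hx⟩ := AddSubgroup.mem_cosetPreservingPerm.1 (closure_range_affTrans_le φ hg) 0
    exact ⟨x, by simpa using hx⟩
  · intro hsurj b c
    obtain ⟨a, ha⟩ := hsurj (c - φ b)
    exact ⟨affTrans φ a, Subgroup.subset_closure ⟨a, rfl⟩, affTrans_apply_eq_of_sub_eq φ ha⟩
end

section
/- Let (A, T) be a crossing system and Q a finite quandle. If (A, T) admits a non-trivial Q-coloring (a coloring f : A → Q that is not constant), then there exists a finite simple quandle Q' with |Q'| ≤ |Q| such that (A, T) admits a non-trivial Q'-coloring. -/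
/-- A quandle structure on a type: idempotent, bijective left translations,
left self-distributive. -/
structure IsQuandle {Q : Type*} (op : Q → Q → Q) : Prop where
  idem : ∀ a, op a a = a
  leftBij : ∀ a, Function.Bijective fun x => op a x
  selfDistrib : ∀ a b c, op a (op b c) = op (op a b) (op a c)

/-- A congruence on a quandle: an equivalence relation compatible with the
operation. -/
def IsCongruence {Q : Type*} (op : Q → Q → Q) (r : Q → Q → Prop) : Prop :=
  Equivalence r ∧ ∀ a b c d, r a b → r c d → r (op a c) (op b d)

/-- A quandle is simple if it has at least two elements and its only
congruences are equality and the total relation. -/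
def IsSimpleQuandle {Q : Type*} (op : Q → Q → Q) : Prop :=
  Nontrivial Q ∧ ∀ r : Q → Q → Prop, IsCongruence op r →
    (∀ a b, r a b ↔ a = b) ∨ (∀ a b, r a b)

/- Induction on `|Q|`. If `Q` is not simple, pick a congruence `r` that is neither equality nor
total. Either the coloring stays inside a single `r`-class, which is a proper subquandle, or it
descends to a non-trivial coloring by the proper quotient `Q / r`. For finite quandles both
constructions are again quandles, since an injective or surjective self-map of a finite set is
bijective. -/

universe u

section

variable {A Q : Type*}

def IsColoring (T : Set (A × A × A)) (op : Q → Q → Q) (f : A → Q) : Prop :=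
  ∀ t ∈ T, op (f t.1) (f t.2.1) = f t.2.2

def NontriviallyColorable (T : Set (A × A × A)) (op : Q → Q → Q) : Prop :=
  ∃ f : A → Q, IsColoring T op f ∧ ∃ a b, f a ≠ f b

theorem NontriviallyColorable.nontrivial {T : Set (A × A × A)} {op : Q → Q → Q}
    (h : NontriviallyColorable T op) : Nontrivial Q :=
  let ⟨f, _, a, b, hab⟩ := h
  ⟨f a, f b, hab⟩

namespace IsCongruence

variable {op : Q → Q → Q} {r : Q → Q → Prop}

theorem op_rel (hQ : IsQuandle op) (hr : IsCongruence op r) {x y a : Q}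
    (hx : r x a) (hy : r y a) : r (op x y) a := by
  simpa only [hQ.idem] using hr.2 _ _ _ _ hx hy

def setoid (hr : IsCongruence op r) : Setoid Q := ⟨r, hr.1⟩

def quotientOp (hr : IsCongruence op r) :
    Quotient hr.setoid → Quotient hr.setoid → Quotient hr.setoid :=
  Quotient.map₂ op fun _ _ hxu _ _ hyv => hr.2 _ _ _ _ hxu hyv

theorem quotientOp_mk (hr : IsCongruence op r) (x y : Q) :
    hr.quotientOp ⟦x⟧ ⟦y⟧ = ⟦op x y⟧ :=
  rfl

theorem isQuandle_quotientOp [Finite Q] (hQ : IsQuandle op) (hr : IsCongruence op r) :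
    IsQuandle hr.quotientOp where
  idem x := by
    induction x using Quotient.ind with | _ x => rw [quotientOp_mk, hQ.idem]
  leftBij x := by
    rw [← Finite.surjective_iff_bijective]
    intro y
    induction x using Quotient.ind with | _ x =>
    induction y using Quotient.ind with | _ y =>
    obtain ⟨z, hz⟩ := (hQ.leftBij x).2 y
    exact ⟨⟦z⟧, congrArg _ hz⟩
  selfDistrib x y z := by
    induction x using Quotient.ind with | _ x =>
    induction y using Quotient.ind with | _ y =>
    induction z using Quotient.ind with | _ z =>
    exact congrArg _ (hQ.selfDistrib x y z)

end IsCongruence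

def subtypeOp (op : Q → Q → Q) (S : Set Q) (hS : ∀ x ∈ S, ∀ y ∈ S, op x y ∈ S) :
    S → S → S :=
  fun x y => ⟨op x y, hS x x.2 y y.2⟩

theorem IsQuandle.subtypeOp [Finite Q] {op : Q → Q → Q} (hQ : IsQuandle op) (S : Set Q)
    (hS : ∀ x ∈ S, ∀ y ∈ S, op x y ∈ S) : IsQuandle (subtypeOp op S hS) where
  idem x := Subtype.ext (hQ.idem x)
  leftBij x := Finite.injective_iff_bijective.1 fun _ _ h =>
    Subtype.ext ((hQ.leftBij x).1 (congrArg Subtype.val h))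
  selfDistrib x y z := Subtype.ext (hQ.selfDistrib x y z)

theorem exists_nontrivial_proper_congruence [Nontrivial Q] {op : Q → Q → Q}
    (h : ¬IsSimpleQuandle op) :
    ∃ r, IsCongruence op r ∧ (∃ p q, p ≠ q ∧ r p q) ∧ ∃ c d, ¬r c d := by
  have h : ¬∀ r, IsCongruence op r → (∀ a b, r a b ↔ a = b) ∨ ∀ a b, r a b :=
    fun h' => h ⟨inferInstance, h'⟩
  push Not at h
  obtain ⟨r, hr, ⟨p, q, hpq⟩, hnot_total⟩ := h
  refine ⟨r, hr, ⟨p, q, ?_⟩, hnot_total⟩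
  rcases hpq with ⟨hrpq, hpq⟩ | ⟨hrpp, rfl⟩
  · exact ⟨hpq, hrpq⟩
  · exact absurd (hr.1.refl p) hrpp

theorem nontriviallyColorable_subtypeOp {T : Set (A × A × A)} {op : Q → Q → Q} {S : Set Q}
    (hS : ∀ x ∈ S, ∀ y ∈ S, op x y ∈ S) {f : A → Q} (hf : IsColoring T op f)
    (hfS : ∀ u, f u ∈ S) {a b : A} (hab : f a ≠ f b) :
    NontriviallyColorable T (subtypeOp op S hS) :=
  ⟨fun u => ⟨f u, hfS u⟩, fun t ht => Subtype.ext (hf t ht), a, b,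
    fun h => hab (congrArg Subtype.val h)⟩

theorem IsCongruence.nontriviallyColorable_quotientOp {T : Set (A × A × A)} {op : Q → Q → Q}
    {r : Q → Q → Prop} (hr : IsCongruence op r) {f : A → Q} (hf : IsColoring T op f)
    {a b : A} (hab : ¬r (f a) (f b)) : NontriviallyColorable T hr.quotientOp :=
  ⟨fun u => ⟦f u⟧, fun t ht => by rw [hr.quotientOp_mk, hf t ht], a, b,
    fun h => hab (Quotient.exact h)⟩

theorem exists_smaller_of_not_isSimpleQuandle {Q : Type u} [Fintype Q] {T : Set (A × A × A)}
    {op : Q → Q → Q} (hQ : IsQuandle op) (hsimple : ¬IsSimpleQuandle op)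
    (hcol : NontriviallyColorable T op) :
    ∃ (Q₁ : Type u) (_ : Fintype Q₁) (op₁ : Q₁ → Q₁ → Q₁), IsQuandle op₁ ∧
      Fintype.card Q₁ < Fintype.card Q ∧ NontriviallyColorable T op₁ := by
  classical
  have := hcol.nontrivial
  obtain ⟨f, hf, a, b, hab⟩ := hcol
  obtain ⟨r, hr, ⟨p, q, hpq, hrpq⟩, c, d, hcd⟩ := exists_nontrivial_proper_congruence hsimple
  by_cases hclass : ∀ u, r (f u) (f a)
  · let S : Set Q := {x | r x (f a)}
    have hS : ∀ x ∈ S, ∀ y ∈ S, op x y ∈ S := fun x hx y hy => hr.op_rel hQ hx hy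
    obtain ⟨x, hx⟩ : ∃ x, x ∉ S := by
      by_contra! hall
      exact hcd (hr.1.trans (hall c) (hr.1.symm (hall d)))
    exact ⟨S, inferInstance, subtypeOp op S hS, hQ.subtypeOp S hS, Fintype.card_subtype_lt hx,
      nontriviallyColorable_subtypeOp hS hf hclass hab⟩
  · push Not at hclass
    obtain ⟨u, hu⟩ := hclass
    have hcard : Fintype.card (Quotient hr.setoid) < Fintype.card Q :=
      Fintype.card_lt_of_surjective_not_injective _ Quotient.mk_surjective
        fun hinj => hpq (hinj (Quotient.sound hrpq))
    exact ⟨Quotient hr.setoid, inferInstance, hr.quotientOp, hr.isQuandle_quotientOp hQ, hcard,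
      hr.nontriviallyColorable_quotientOp hf hu⟩

theorem exists_simple_of_nontriviallyColorable {T : Set (A × A × A)} (n : ℕ) :
    ∀ (Q : Type u) (_ : Fintype Q) (op : Q → Q → Q), IsQuandle op → Fintype.card Q = n →
      NontriviallyColorable T op →
      ∃ (Q' : Type u) (_ : Fintype Q') (op' : Q' → Q' → Q'), IsQuandle op' ∧
        IsSimpleQuandle op' ∧ Fintype.card Q' ≤ n ∧ NontriviallyColorable T op' := by
  induction n using Nat.strong_induction_on with
  | _ n ih =>
    intro Q _ op hQ hcard hcol
    subst hcard
    by_cases hsimple : IsSimpleQuandle op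
    · exact ⟨Q, _, op, hQ, hsimple, le_rfl, hcol⟩
    obtain ⟨Q₁, _, op₁, hQ₁, hlt, hcol₁⟩ := exists_smaller_of_not_isSimpleQuandle hQ hsimple hcol
    obtain ⟨Q', _, op', hQ', hsimple', hle, hcol'⟩ := ih _ hlt Q₁ _ op₁ hQ₁ rfl hcol₁
    exact ⟨Q', _, op', hQ', hsimple', hle.trans hlt.le, hcol'⟩

end

/-- if a crossing system `(A, T)` admits a non-trivial coloring
by a finite quandle `Q`, then it admits a non-trivial coloring by some finite
simple quandle `Q'` with `|Q'| ≤ |Q|`. -/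
theorem nontrivially_colorable_by_simple {A : Type*} (T : Set (A × A × A))
    {Q : Type} [Fintype Q] (op : Q → Q → Q) (hQ : IsQuandle op)
    (f : A → Q) (hf : ∀ t ∈ T, op (f t.1) (f t.2.1) = f t.2.2)
    (hnt : ∃ a b, f a ≠ f b) :
    ∃ (Q' : Type) (_ : Fintype Q') (op' : Q' → Q' → Q'),
      IsQuandle op' ∧ IsSimpleQuandle op' ∧ Fintype.card Q' ≤ Fintype.card Q ∧
      ∃ f' : A → Q', (∀ t ∈ T, op' (f' t.1) (f' t.2.1) = f' t.2.2) ∧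
        ∃ a b, f' a ≠ f' b :=
  exists_simple_of_nontriviallyColorable _ Q _ op hQ rfl ⟨f, hf, hnt⟩
end

section
/- Correctness of the SAT encoding of quandle colorability: let Q be a finite nonempty quandle and (A, T) a crossing system with A finite. Then there exists an assignment v : A × Q → Bool satisfying all of the following clauses — (i) for each α ∈ A there is at least one c ∈ Q with v(α, c) = true, and for each α ∈ A and distinct c, d ∈ Q not both v(α, c) and v(α, d) are true; (ii) for each c ∈ Q, not every α ∈ A has v(α, c) = true; (iii) for each crossing (α, β, γ) ∈ T and all c, d ∈ Q, if v(α, c) = true and v(β, d) = true then v(γ, c ◃ d) = true — if and only if (A, T) admits a non-trivial Q-coloring. -/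
/-! A satisfying assignment of clauses (i) is exactly the one-hot encoding `p ↦ (f p.1 = p.2)`
of a map `f : A → Q`. Under this encoding clauses (iii) say that `f` respects every crossing, and
clauses (ii) say that no colour is taken by every arc, i.e. that `f` is non-constant: when `A`
is empty, some colour of `Q` is vacuously taken by every arc. -/

section OneHot

variable {A Q : Type*} [DecidableEq Q]

def graphAssignment (f : A → Q) : A × Q → Bool := fun p => decide (f p.1 = p.2)

@[simp]
theorem graphAssignment_eq_true {f : A → Q} {a : A} {c : Q} :
    graphAssignment f (a, c) = true ↔ f a = c :=
  decide_eq_true_iff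

theorem exists_eq_graphAssignment {v : A × Q → Bool} (hex : ∀ α, ∃ c, v (α, c) = true)
    (huniq : ∀ α c d, c ≠ d → ¬(v (α, c) = true ∧ v (α, d) = true)) :
    ∃ f : A → Q, v = graphAssignment f := by
  choose f hf using hex
  refine ⟨f, funext fun ⟨α, c⟩ => Bool.eq_iff_iff.2 ?_⟩
  rw [graphAssignment_eq_true]
  refine ⟨fun hc => ?_, fun h => h ▸ hf α⟩
  by_contra hne
  exact huniq α _ _ hne ⟨hf α, hc⟩

theorem graphAssignment_crossing_iff (op : Q → Q → Q) (T : Set (A × A × A)) (f : A → Q) :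
    (∀ t ∈ T, ∀ c d, graphAssignment f (t.1, c) = true → graphAssignment f (t.2.1, d) = true →
      graphAssignment f (t.2.2, op c d) = true) ↔
    ∀ t ∈ T, op (f t.1) (f t.2.1) = f t.2.2 := by
  simp only [graphAssignment_eq_true]
  constructor
  · exact fun h t ht => (h t ht _ _ rfl rfl).symm
  · rintro h t ht _ _ rfl rfl
    exact (h t ht).symm

theorem graphAssignment_no_full_column_iff [Nonempty Q] (f : A → Q) :
    (∀ c, ¬∀ α, graphAssignment f (α, c) = true) ↔ ∃ a b, f a ≠ f b := by
  simp only [graphAssignment_eq_true]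
  constructor
  · intro hcol
    by_contra! hconst
    rcases isEmpty_or_nonempty A with _ | ⟨⟨α₀⟩⟩
    · exact hcol (Classical.arbitrary Q) isEmptyElim
    · exact hcol (f α₀) fun α => hconst α α₀
  · rintro ⟨a, b, hab⟩ c hall
    exact hab ((hall a).trans (hall b).symm)

end OneHot

theorem sat_encoding_correct_general {A : Type*} {Q : Type*} [Nonempty Q]
    (op : Q → Q → Q) (T : Set (A × A × A)) :
    (∃ v : A × Q → Bool,
      (∀ α : A, ∃ c : Q, v (α, c) = true) ∧
      (∀ α : A, ∀ c d : Q, c ≠ d → ¬(v (α, c) = true ∧ v (α, d) = true)) ∧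
      (∀ c : Q, ¬(∀ α : A, v (α, c) = true)) ∧
      (∀ t ∈ T, ∀ c d : Q,
        v (t.1, c) = true → v (t.2.1, d) = true → v (t.2.2, op c d) = true)) ↔
    (∃ f : A → Q, (∀ t ∈ T, op (f t.1) (f t.2.1) = f t.2.2) ∧ ∃ a b, f a ≠ f b) := by
  classical
  constructor
  · rintro ⟨v, hex, huniq, hcolumn, hcross⟩
    obtain ⟨f, rfl⟩ := exists_eq_graphAssignment hex huniq
    exact ⟨f, (graphAssignment_crossing_iff op T f).1 hcross,
      (graphAssignment_no_full_column_iff f).1 hcolumn⟩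
  · rintro ⟨f, hcol, hnonconst⟩
    refine ⟨graphAssignment f, fun α => ⟨f α, by simp⟩, fun α c d hcd ⟨hc, hd⟩ => ?_,
      (graphAssignment_no_full_column_iff f).2 hnonconst,
      (graphAssignment_crossing_iff op T f).2 hcol⟩
    rw [graphAssignment_eq_true] at hc hd
    exact hcd (hc.symm.trans hd)

/-- correctness of the SAT encoding of quandle colorability: for
a finite nonempty quandle `Q` and a finite crossing system `(A, T)`, there is
a satisfying boolean assignment for the clauses (i)-(iii) if and only if
`(A, T)` admits a non-trivial `Q`-coloring. -/
theorem sat_encoding_correct {A : Type*} [Finite A] {Q : Type*} [Finite Q] [Nonempty Q]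
    (op : Q → Q → Q) (hQ : IsQuandle op) (T : Set (A × A × A)) :
    (∃ v : A × Q → Bool,
      (∀ α : A, ∃ c : Q, v (α, c) = true) ∧
      (∀ α : A, ∀ c d : Q, c ≠ d → ¬(v (α, c) = true ∧ v (α, d) = true)) ∧
      (∀ c : Q, ¬(∀ α : A, v (α, c) = true)) ∧
      (∀ t ∈ T, ∀ c d : Q,
        v (t.1, c) = true → v (t.2.1, d) = true → v (t.2.2, op c d) = true)) ↔
    (∃ f : A → Q, (∀ t ∈ T, op (f t.1) (f t.2.1) = f t.2.2) ∧ ∃ a b, f a ≠ f b) :=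
  sat_encoding_correct_general op T
end
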